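/- Intertwining of the Radon transform with differentiation: for Schwartz f on ℝ², ∂/∂s [Rf](θ,s) = R[Θ_θ · ∇f](θ,s), i.e., the s-derivative of the Radon transform equals the Radon transform of the directional derivative of f in the direction Θ_θ. -/

import Mathlib

open MeasureTheory

/-- The 2D Radon transform. -/
noncomputable def radon (f : ℝ × ℝ → ℝ) (θ s : ℝ) : ℝ :=
  ∫ t : ℝ, f (s * Real.cos θ + t * Real.sin θ, s * Real.sin θ - t * Real.cos θ)

/-!
In the coordinates `p = s Θ_θ + t Θ_θ^⊥`, i.e. after composing `f` with the reflection
`radonFrame θ`, `f` becomes a Schwartz function `g` on `ℝ × ℝ` with `Rf(θ, s) = ∫ g (s, t) dt`,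
and `∂_s g` is the pullback of `Θ_θ · ∇f`. Differentiation under the integral sign is legitimate
because a Schwartz function on `D × E` is bounded by `C (1 + ‖t‖)^(-n)` uniformly in the first
variable, which is integrable for large `n` against any measure of temperate growth.
-/

open LineDeriv

namespace SchwartzMap

variable {D E F : Type*} [NormedAddCommGroup D] [NormedSpace ℝ D]
  [NormedAddCommGroup E] [NormedSpace ℝ E] [MeasurableSpace E] {μ : Measure E}
  [NormedAddCommGroup F] [NormedSpace ℝ F]

theorem exists_integrable_bound_apply_prodMk [μ.HasTemperateGrowth] (g : 𝓢(D × E, F)) :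
    ∃ bound : E → ℝ, Integrable bound μ ∧ ∀ s t, ‖g (s, t)‖ ≤ bound t := by
  obtain ⟨n, hn⟩ := Measure.HasTemperateGrowth.exists_integrable (μ := μ)
  set C := 2 ^ n * (Finset.Iic (n, 0)).sup (fun m => SchwartzMap.seminorm ℝ m.1 m.2) g
  refine ⟨fun t => (1 + ‖t‖) ^ (-(n : ℝ)) * C, hn.mul_const C, fun s t => ?_⟩
  dsimp only
  rw [Real.rpow_neg (by positivity), Real.rpow_natCast, ← div_eq_inv_mul,
    le_div_iff₀' (by positivity)]
  calc (1 + ‖t‖) ^ n * ‖g (s, t)‖ ≤ (1 + ‖((s, t) : D × E)‖) ^ n * ‖g (s, t)‖ := by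
        gcongr; exact norm_snd_le (s, t)
    _ ≤ C := by
        simpa using one_add_le_sup_seminorm_apply (𝕜 := ℝ) (m := (n, 0)) le_rfl le_rfl g (s, t)

variable [OpensMeasurableSpace E] [SecondCountableTopology E]

theorem aestronglyMeasurable_apply_prodMk (g : 𝓢(D × E, F)) (s : D) :
    AEStronglyMeasurable (fun t => g (s, t)) μ :=
  (g.continuous.comp (Continuous.prodMk_right s)).aestronglyMeasurable

variable [μ.HasTemperateGrowth]

theorem integrable_apply_prodMk (g : 𝓢(D × E, F)) (s : D) :
    Integrable (fun t => g (s, t)) μ := by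
  obtain ⟨bound, hbound_int, hbound⟩ := exists_integrable_bound_apply_prodMk (μ := μ) g
  exact hbound_int.mono' (aestronglyMeasurable_apply_prodMk g s) (.of_forall (hbound s))

theorem hasDerivAt_integral_apply_prodMk (g : 𝓢(ℝ × E, F)) (s : ℝ) :
    HasDerivAt (fun s => ∫ t, g (s, t) ∂μ) (∫ t, ∂_{((1, 0) : ℝ × E)} g (s, t) ∂μ) s := by
  obtain ⟨bound, hbound_int, hbound⟩ :=
    exists_integrable_bound_apply_prodMk (μ := μ) (∂_{((1, 0) : ℝ × E)} g)
  have hderiv (t : E) (s : ℝ) :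
      HasDerivAt (fun s => g (s, t)) (∂_{((1, 0) : ℝ × E)} g (s, t)) s :=
    (g.hasFDerivAt (s, t)).comp_hasDerivAt s ((hasDerivAt_id s).prodMk (hasDerivAt_const s t))
  exact (hasDerivAt_integral_of_dominated_loc_of_deriv_le Filter.univ_mem
    (.of_forall (aestronglyMeasurable_apply_prodMk g)) (integrable_apply_prodMk g s)
    (aestronglyMeasurable_apply_prodMk _ s) (.of_forall fun t s _ => hbound s t) hbound_int
    (.of_forall fun t s _ => hderiv t s)).2

end SchwartzMap

open SchwartzMap

noncomputable def radonFrame (θ : ℝ) : (ℝ × ℝ) ≃L[ℝ] ℝ × ℝ :=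
  LinearEquiv.toContinuousLinearEquiv <| LinearEquiv.ofInvolutive
    { toFun := fun p => (p.1 * Real.cos θ + p.2 * Real.sin θ, p.1 * Real.sin θ - p.2 * Real.cos θ)
      map_add' := fun p q => by ext <;> simp only [Prod.fst_add, Prod.snd_add] <;> ring
      map_smul' := fun c p => by
        ext <;> simp only [Prod.smul_fst, Prod.smul_snd, smul_eq_mul, RingHom.id_apply] <;> ring }
    fun p => by
      ext <;> simp only [LinearMap.coe_mk, AddHom.coe_mk]
      · linear_combination p.1 * Real.sin_sq_add_cos_sq θ
      · linear_combination p.2 * Real.sin_sq_add_cos_sq θ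

@[simp]
theorem radonFrame_apply (θ : ℝ) (p : ℝ × ℝ) :
    radonFrame θ p = (p.1 * Real.cos θ + p.2 * Real.sin θ, p.1 * Real.sin θ - p.2 * Real.cos θ) :=
  rfl

/-- the Radon transform intertwines the `s`-derivative with the
directional derivative: `∂/∂s [Rf](θ,s) = R[Θ_θ·∇f](θ,s)` for Schwartz `f`. -/
theorem radon_deriv_eq_radon_directional (f : SchwartzMap (ℝ × ℝ) ℝ) (θ s : ℝ) :
    deriv (fun s' : ℝ => radon (⇑f) θ s') s
      = radon (fun x : ℝ × ℝ =>
          fderiv ℝ (⇑f) x (Real.cos θ, Real.sin θ)) θ s := by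
  have hderiv := hasDerivAt_integral_apply_prodMk (μ := volume)
    (compCLMOfContinuousLinearEquiv ℝ (radonFrame θ) f) s
  simp only [lineDerivOp_compCLMOfContinuousLinearEquiv, radonFrame_apply, one_mul, zero_mul,
    add_zero, sub_zero] at hderiv
  -- `compCLMOfContinuousLinearEquiv` is plain composition, so both sides unfold `radon`.
  exact hderiv.deriv
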